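/- If P, Q, R are positive definite and Pol(R^(1/2) P^(1/2)) = Pol(R^(1/2) Q^(1/2)), then there exists a positive definite B commuting with H := P^(-1/4) Q^(1/2) P^(-1/4) such that R = P^(-1/4) B P^(1/2) B P^(-1/4). -/

import Mathlib

/-!
Let `U` be the common polar factor. Then `S := U* R^(1/2) P^(1/2)` is positive definite with
`S² = P^(1/2) R P^(1/2)`, and `U* R^(1/2) Q^(1/2) = S P^(-1/2) Q^(1/2)` is positive definite as
well, in particular Hermitian. Take `B := P^(-1/4) S P^(-1/4)`: Hermitianity of
`S P^(-1/2) Q^(1/2)` says exactly that `B` commutes with `H`, and the formula for `S²` unwinds to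
`R = P^(-1/4) B P^(1/2) B P^(-1/4)`.
-/

open scoped Classical
open Matrix
open scoped ComplexOrder


noncomputable def mpow {d : ℕ} (A : Matrix (Fin d) (Fin d) ℂ) (t : ℝ) : Matrix (Fin d) (Fin d) ℂ :=
  if hA : A.IsHermitian then
    (hA.eigenvectorUnitary : Matrix (Fin d) (Fin d) ℂ) *
      Matrix.diagonal (fun i => ((hA.eigenvalues i ^ t : ℝ) : ℂ)) *
      (star (hA.eigenvectorUnitary : Matrix (Fin d) (Fin d) ℂ))
  else 0


/-- The unitary polar factor of an invertible matrix: the unique unitary `U` with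
`star U * X` positive definite (junk value `1` if none exists). -/
noncomputable def polar {d : ℕ} (X : Matrix (Fin d) (Fin d) ℂ) : Matrix (Fin d) (Fin d) ℂ :=
  if h : ∃ U : Matrix (Fin d) (Fin d) ℂ, U ∈ Matrix.unitaryGroup (Fin d) ℂ ∧ (star U * X).PosDef
  then h.choose else 1


section Mpow

variable {d : ℕ} {A : Matrix (Fin d) (Fin d) ℂ}

lemma mpow_of_isHermitian (hA : A.IsHermitian) (t : ℝ) :
    mpow A t = (hA.eigenvectorUnitary : Matrix (Fin d) (Fin d) ℂ) *
      diagonal (fun i => ((hA.eigenvalues i ^ t : ℝ) : ℂ)) *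
      star (hA.eigenvectorUnitary : Matrix (Fin d) (Fin d) ℂ) :=
  dif_pos hA

lemma Matrix.PosDef.mpow (hA : A.PosDef) (t : ℝ) : (mpow A t).PosDef := by
  rw [mpow_of_isHermitian hA.isHermitian,
    Matrix.IsUnit.posDef_star_right_conjugate_iff Unitary.isUnit_coe, posDef_diagonal_iff]
  exact fun i => Complex.zero_lt_real.2 (Real.rpow_pos_of_pos (hA.eigenvalues_pos i) t)

lemma mpow_zero (hA : A.IsHermitian) : mpow A 0 = 1 := by
  simp [mpow_of_isHermitian hA]

lemma mpow_one (hA : A.IsHermitian) : mpow A 1 = A := by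
  simpa [mpow_of_isHermitian hA, Function.comp_def] using hA.spectral_theorem.symm

lemma mpow_mul_mpow (hA : A.PosDef) (s t : ℝ) : mpow A s * mpow A t = mpow A (s + t) := by
  have hV := Unitary.star_mul_self_of_mem hA.isHermitian.eigenvectorUnitary.2
  simp only [mpow_of_isHermitian hA.isHermitian, mul_assoc]
  rw [← mul_assoc (star _) _ _, hV, one_mul, ← mul_assoc (diagonal _),
    diagonal_mul_diagonal]
  simp_rw [← Complex.ofReal_mul, ← Real.rpow_add (hA.eigenvalues_pos _)]

lemma mpow_neg_mul_mpow (hA : A.PosDef) (t : ℝ) : mpow A (-t) * mpow A t = 1 := by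
  rw [mpow_mul_mpow hA, neg_add_cancel, mpow_zero hA.isHermitian]

lemma mpow_mul_mpow_neg (hA : A.PosDef) (t : ℝ) : mpow A t * mpow A (-t) = 1 := by
  rw [mpow_mul_mpow hA, add_neg_cancel, mpow_zero hA.isHermitian]

lemma mpow_half_mul_mpow_half (hA : A.PosDef) : mpow A (1/2) * mpow A (1/2) = A := by
  rw [mpow_mul_mpow hA, add_halves, mpow_one hA.isHermitian]

lemma eq_mpow_neg_quarter_conj_of_mul_self_eq (hA : A.PosDef) {S B : Matrix (Fin d) (Fin d) ℂ}
    (hS : S * S = mpow A (1/2) * B * mpow A (1/2)) :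
    B = mpow A (-(1/4)) * (mpow A (-(1/4)) * S * mpow A (-(1/4))) * mpow A (1/2) *
      (mpow A (-(1/4)) * S * mpow A (-(1/4))) * mpow A (-(1/4)) := by
  set C := mpow A (-(1/4))
  have hCC : C * C = mpow A (-(1/2)) := by rw [mpow_mul_mpow hA]; norm_num
  have hCAC : C * mpow A (1/2) * C = 1 := by
    rw [mpow_mul_mpow hA, mpow_mul_mpow hA]; norm_num; exact mpow_zero hA.isHermitian
  calc B = C * C * mpow A (1/2) * B * (mpow A (1/2) * (C * C)) := by
        rw [hCC, mpow_neg_mul_mpow hA, mpow_mul_mpow_neg hA, one_mul, mul_one]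
    _ = C * C * S * (C * mpow A (1/2) * C) * S * (C * C) := by
        rw [hCAC, mul_one, mul_assoc _ S S, hS]; simp only [mul_assoc]
    _ = C * (C * S * C) * mpow A (1/2) * (C * S * C) * C := by simp only [mul_assoc]

end Mpow

section Polar

variable {d : ℕ} {X : Matrix (Fin d) (Fin d) ℂ}

/-- `X (Xᴴ X)^(-1/2)` is a unitary polar factor of an invertible `X`. -/
lemma exists_unitary_star_mul_posDef (hX : IsUnit X) :
    ∃ U : Matrix (Fin d) (Fin d) ℂ, U ∈ unitaryGroup (Fin d) ℂ ∧ (star U * X).PosDef := by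
  have hM : (Xᴴ * X).PosDef := PosDef.conjTranspose_mul_self X (mulVec_injective_of_isUnit hX)
  set N := mpow (Xᴴ * X) (-(1/2))
  have hNstar : star (X * N) = N * Xᴴ := by
    rw [star_mul, star_eq_conjTranspose, star_eq_conjTranspose, (hM.mpow _).isHermitian.eq]
  have hNX : N * Xᴴ * X = mpow (Xᴴ * X) (1/2) := by
    calc N * Xᴴ * X = N * mpow (Xᴴ * X) 1 := by rw [mul_assoc, mpow_one hM.isHermitian]
      _ = mpow (Xᴴ * X) (1/2) := by rw [mpow_mul_mpow hM]; norm_num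
  refine ⟨X * N, mem_unitaryGroup_iff'.2 ?_, ?_⟩
  · rw [hNstar, ← mul_assoc, hNX, mpow_mul_mpow_neg hM]
  · rw [hNstar, hNX]
    exact hM.mpow _

lemma polar_mem_unitaryGroup (hX : IsUnit X) : polar X ∈ unitaryGroup (Fin d) ℂ := by
  rw [polar, dif_pos (exists_unitary_star_mul_posDef hX)]
  exact (exists_unitary_star_mul_posDef hX).choose_spec.1

lemma posDef_star_polar_mul (hX : IsUnit X) : (star (polar X) * X).PosDef := by
  rw [polar, dif_pos (exists_unitary_star_mul_posDef hX)]
  exact (exists_unitary_star_mul_posDef hX).choose_spec.2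

end Polar

lemma star_mul_mul_star_mul_of_isSelfAdjoint {M : Type*} [Monoid M] [StarMul M] {U X : M}
    (hU : U ∈ unitary M) (h : IsSelfAdjoint (star U * X)) :
    star U * X * (star U * X) = star X * X := by
  nth_rw 1 [← h.star_eq]
  rw [star_mul, star_star, mul_assoc, ← mul_assoc U, Unitary.mul_star_self_of_mem hU, one_mul]

lemma commute_mul_mul_of_isSelfAdjoint {M : Type*} [Monoid M] [StarMul M] {a s c : M}
    (ha : IsSelfAdjoint a) (hs : IsSelfAdjoint s) (hc : IsSelfAdjoint c)
    (h : IsSelfAdjoint (s * (a * a) * c)) : Commute (a * s * a) (a * c * a) := by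
  have hsym : s * (a * a) * c = c * (a * a) * s := by
    simpa [ha.star_eq, hs.star_eq, hc.star_eq, mul_assoc] using h.star_eq.symm
  calc a * s * a * (a * c * a) = a * (s * (a * a) * c) * a := by simp only [mul_assoc]
    _ = a * (c * (a * a) * s) * a := by rw [hsym]
    _ = a * c * a * (a * s * a) := by simp only [mul_assoc]

/-- If `Pol(R^(1/2) P^(1/2)) = Pol(R^(1/2) Q^(1/2))`, then there exists a positive definite
`B` commuting with `H = P^(-1/4) Q^(1/2) P^(-1/4)` with `R = P^(-1/4) B P^(1/2) B P^(-1/4)`. -/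
theorem holevo_base_necessary {d : ℕ} {P Q R : Matrix (Fin d) (Fin d) ℂ}
    (hP : P.PosDef) (hQ : Q.PosDef) (hR : R.PosDef)
    (hpol : polar (mpow R (1/2) * mpow P (1/2)) = polar (mpow R (1/2) * mpow Q (1/2))) :
    ∃ B : Matrix (Fin d) (Fin d) ℂ, B.PosDef ∧
      B * (mpow P (-(1/4)) * mpow Q (1/2) * mpow P (-(1/4)))
        = (mpow P (-(1/4)) * mpow Q (1/2) * mpow P (-(1/4))) * B ∧
      R = mpow P (-(1/4)) * B * mpow P (1/2) * B * mpow P (-(1/4)) := by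
  set A := mpow P (-(1/4))
  set X := mpow R (1/2) * mpow P (1/2)
  have hX : IsUnit X := (hR.mpow _).isUnit.mul (hP.mpow _).isUnit
  set S := star (polar X) * X
  have hS : S.PosDef := posDef_star_polar_mul hX
  have hSS : S * S = mpow P (1/2) * R * mpow P (1/2) := by
    rw [star_mul_mul_star_mul_of_isSelfAdjoint (polar_mem_unitaryGroup hX) hS.isHermitian,
      star_mul, (hP.mpow _).isHermitian.star_eq, (hR.mpow _).isHermitian.star_eq, mul_assoc,
      ← mul_assoc (mpow R _), mpow_half_mul_mpow_half hR, mul_assoc]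
  have hSQ : S * (A * A) * mpow Q (1/2) = star (polar X) * (mpow R (1/2) * mpow Q (1/2)) := by
    rw [mpow_mul_mpow hP]
    simp only [S, X, mul_assoc]
    rw [← mul_assoc (mpow P (1/2)), mpow_mul_mpow hP]
    norm_num [mpow_zero hP.isHermitian]
  refine ⟨A * S * A, ?_, (commute_mul_mul_of_isSelfAdjoint (hP.mpow _).isHermitian
    hS.isHermitian (hQ.mpow _).isHermitian ?_).eq, eq_mpow_neg_quarter_conj_of_mul_self_eq hP hSS⟩
  · have := (Matrix.IsUnit.posDef_star_right_conjugate_iff (hP.mpow (-(1/4))).isUnit).2 hS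
    rwa [(hP.mpow _).isHermitian.star_eq] at this
  · rw [hSQ, hpol]
    exact (posDef_star_polar_mul ((hR.mpow _).isUnit.mul (hQ.mpow _).isUnit)).isHermitian
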